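/- Lemma 3.2 (coefficient-wise form): for every n ≥ 0 and every i ≥ 1, ∑_{p=1}^{n} (−1)^p a_{n,p} c_{p,i−1}(q) = (1/(q² − q^{−2})) ∑_{k=1}^{i} α_k^{(i)} f_n(−q^{2(2k−1)}), where α_k^{(i)} := (−1)^{i−k} [2i−1 choose i−k]_{q²}. -/

import Mathlib

/- STATEMENT 10: Lemma 3.2 (coefficient-wise form): for every n ≥ 0 and every i ≥ 1,
∑_{p=1}^{n} (−1)^p a_{n,p} c_{p,i−1}(q)
  = (1/(q² − q^{−2})) ∑_{k=1}^{i} α_k^{(i)} f_n(−q^{2(2k−1)}),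
where α_k^{(i)} = (−1)^{i−k} [2i−1 choose i−k]_{q²}. -/

noncomputable section

/-- The field `F = ℚ(q, t₁, t₂)` of rational functions in three indeterminates. -/
abbrev F : Type := FractionRing (MvPolynomial (Fin 3) ℚ)

def q : F := algebraMap (MvPolynomial (Fin 3) ℚ) F (MvPolynomial.X 0)
def t1 : F := algebraMap (MvPolynomial (Fin 3) ℚ) F (MvPolynomial.X 1)
def t2 : F := algebraMap (MvPolynomial (Fin 3) ℚ) F (MvPolynomial.X 2)

/-- `A_p = (q^{2p−1}t₁^{−1} − q^{1−2p}t₁ + t₂ − t₂^{−1})/(q^{2p−1} − q^{1−2p})`. -/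
def A (p : ℤ) : F :=
  (q ^ (2 * p - 1) * t1⁻¹ - q ^ (1 - 2 * p) * t1 + t2 - t2⁻¹) /
    (q ^ (2 * p - 1) - q ^ (1 - 2 * p))

/-- The coefficients `a_{n,p}` defined by the DAHA recurrence. -/
def a : ℕ → ℤ → F
  | 0, _ => 0
  | 1, p => if p = 1 then 1 else if p = -1 then -1 else 0
  | n + 2, p =>
      A p * a (n + 1) (p - 1) + (A p - A (p + 1)) * a (n + 1) p
        + A (-p) * a (n + 1) (p + 1) - a n p

/-- The classical cyclotomic coefficient `c_{n,i−1}(q)`: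
`(1/(q² − q^{−2})) ∏_{p=n−i+1}^{n+i−1} (q^{2p} − q^{−2p})` for `1 ≤ i ≤ n`, and `0` for `i > n`. -/
def cyc (n i : ℕ) : F :=
  if 1 ≤ i ∧ i ≤ n then
    (q ^ (2 : ℤ) - q ^ (-2 : ℤ))⁻¹ *
      ∏ p ∈ Finset.Icc ((n : ℤ) - i + 1) ((n : ℤ) + i - 1), (q ^ (2 * p) - q ^ (-(2 * p)))
  else 0

/-- The balanced q-binomial coefficient `[n choose m]_{q²}`. -/
def qbinom (n m : ℕ) : F :=
  ∏ k ∈ Finset.range m,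
    (q ^ (2 * ((n : ℤ) - k)) - q ^ (-(2 * ((n : ℤ) - k)))) /
      (q ^ (2 * ((m : ℤ) - k)) - q ^ (-(2 * ((m : ℤ) - k))))

/-- `α_k^{(i)} = (−1)^{i−k} [2i−1 choose i−k]_{q²}`. -/
def alpha (i k : ℕ) : F := (-1 : F) ^ (i - k) * qbinom (2 * i - 1) (i - k)

/-- The evaluation `f_n(c)` of `f_n = ∑_{p=1}^{n} a_{n,p}(U^p − U^{−p})` at `U = c`. -/
def fev (n : ℕ) (c : F) : F :=
  ∑ p ∈ Finset.Icc (1 : ℤ) (n : ℤ), a n p * (c ^ p - c ^ (-p))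

/-! Both sides are linear in the coefficients `a_{n,p}`, so it suffices to show, for each `p`, that
`(-1)^p {2} c_{p,i-1} = ∑_k α_k^{(i)} (x_k^p - x_k^{-p})` with `x_k = -q^{2(2k-1)}`. With
`m = 2i - 1` and `y = q^{2p}`, the product `∏_{j=p-i+1}^{p+i-1} {2j}` is the left side of the
balanced q-binomial theorem
`∏_{l<m} (y q^{2l-m+1} - y⁻¹ q^{-(2l-m+1)}) = ∑_{k≤m} (-1)^{m+k} [m choose k]_{q²} y^{2k-m}`,
and pairing the terms `k` and `m - k` via the symmetry of the q-binomial coefficients turns the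
right side into `∑_k α_k^{(i)} {2(2k-1)p}`. -/

open Finset

/-- The paper's `{2a}`. -/
def brace (a : ℤ) : F := q ^ (2 * a) - q ^ (-(2 * a))

lemma q_ne_zero : q ≠ 0 := by
  rw [q, ne_eq, map_eq_zero_iff _ (IsFractionRing.injective (MvPolynomial (Fin 3) ℚ) F)]
  exact MvPolynomial.X_ne_zero 0

lemma q_pow_ne_one {m : ℕ} (hm : m ≠ 0) : q ^ m ≠ 1 := by
  rw [q, ← map_pow, ne_eq, ← map_one (algebraMap (MvPolynomial (Fin 3) ℚ) F),
    (IsFractionRing.injective (MvPolynomial (Fin 3) ℚ) F).eq_iff]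
  intro h
  simpa [zero_pow hm] using congrArg MvPolynomial.constantCoeff h

lemma brace_ne_zero {a : ℤ} (ha : 0 < a) : brace a ≠ 0 := by
  lift a to ℕ using ha.le
  rw [brace, zpow_neg, sub_ne_zero, ne_eq, ← mul_eq_one_iff_eq_inv₀ (zpow_ne_zero _ q_ne_zero),
    ← zpow_add₀ q_ne_zero, ← two_mul, ← mul_assoc]
  exact_mod_cast q_pow_ne_one (by omega)

def qDescFactorial (m k : ℕ) : F := ∏ j ∈ range k, brace ((m : ℤ) - j)

lemma qbinom_eq_div (m k : ℕ) : qbinom m k = qDescFactorial m k / qDescFactorial k k :=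
  prod_div_distrib _ _

lemma qbinom_zero_right (m : ℕ) : qbinom m 0 = 1 := by
  simp [qbinom]

lemma qbinom_eq_zero_of_lt {m k : ℕ} (h : m < k) : qbinom m k = 0 := by
  rw [qbinom_eq_div, qDescFactorial, prod_eq_zero (mem_range.mpr h) (by simp [brace]), zero_div]

lemma qDescFactorial_succ_right (m k : ℕ) :
    qDescFactorial m (k + 1) = qDescFactorial m k * brace ((m : ℤ) - k) :=
  prod_range_succ _ _

lemma qDescFactorial_succ_succ (m k : ℕ) :
    qDescFactorial (m + 1) (k + 1) = brace ((m : ℤ) + 1) * qDescFactorial m k := by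
  simp only [qDescFactorial, prod_range_succ', mul_comm (∏ j ∈ range k, _)]
  congr 1
  exact prod_congr rfl fun j _ => by push_cast; ring_nf

lemma qDescFactorial_self_ne_zero (k : ℕ) : qDescFactorial k k ≠ 0 :=
  prod_ne_zero_iff.mpr fun j hj => brace_ne_zero (by simp only [mem_range] at hj; omega)

lemma qDescFactorial_mul_self {m k : ℕ} (h : k ≤ m) :
    qDescFactorial m k * qDescFactorial (m - k) (m - k) = qDescFactorial m m := by
  obtain ⟨d, rfl⟩ := Nat.exists_eq_add_of_le h
  rw [Nat.add_sub_cancel_left, qDescFactorial, qDescFactorial, qDescFactorial, prod_range_add]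
  refine congrArg _ (prod_congr rfl fun j _ => ?_)
  push_cast [h]
  ring_nf

lemma qbinom_symm {m k : ℕ} (h : k ≤ m) : qbinom m (m - k) = qbinom m k := by
  have hsymm := qDescFactorial_mul_self (Nat.sub_le m k)
  rw [Nat.sub_sub_self h] at hsymm
  rw [qbinom_eq_div, qbinom_eq_div, div_eq_div_iff (qDescFactorial_self_ne_zero _)
    (qDescFactorial_self_ne_zero _), hsymm, qDescFactorial_mul_self h]

lemma brace_succ (m k : ℤ) :
    brace (m + 1) = q ^ (2 * (m - k)) * brace (k + 1) + q ^ (-(2 * (k + 1))) * brace (m - k) := by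
  simp only [brace, mul_sub, ← zpow_add₀ q_ne_zero]
  ring_nf

lemma qbinom_pascal (m k : ℕ) :
    qbinom (m + 1) (k + 1) =
      q ^ (2 * ((m : ℤ) - k)) * qbinom m k + q ^ (-(2 * ((k : ℤ) + 1))) * qbinom m (k + 1) := by
  have hk := qDescFactorial_self_ne_zero k
  have hk1 := brace_ne_zero (a := (k : ℤ) + 1) (by positivity)
  rw [qbinom_eq_div, qbinom_eq_div, qbinom_eq_div, qDescFactorial_succ_succ,
    qDescFactorial_succ_succ, qDescFactorial_succ_right, brace_succ m k]
  field_simp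

lemma qbinom_sum_succ (m : ℕ) {y : F} (hy : y ≠ 0) :
    ∑ k ∈ range (m + 2),
        (-1) ^ (m + 1 + k) * qbinom (m + 1) k * y ^ (2 * (k : ℤ) - (m + 1 : ℕ)) =
      (∑ k ∈ range (m + 1), (-1) ^ (m + k) * qbinom m k * (y * q⁻¹) ^ (2 * (k : ℤ) - m)) *
        (y * q ^ (m : ℤ) - y⁻¹ * q ^ (-(m : ℤ))) := by
  set U : ℕ → F := fun k => (-1) ^ (m + k) * qbinom m k * q ^ (2 * ((m : ℤ) - k)) *
    y ^ (2 * (k : ℤ) - m + 1)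
  set L : ℕ → F := fun k => (-1) ^ (m + k) * qbinom m k * q ^ (-(2 * (k : ℤ))) *
    y ^ (2 * (k : ℤ) - m - 1)
  have hsucc (k : ℕ) : (-1) ^ (m + 1 + (k + 1)) * qbinom (m + 1) (k + 1) *
      y ^ (2 * ((k + 1 : ℕ) : ℤ) - (m + 1 : ℕ)) = U k - L (k + 1) := by
    simp only [U, L, qbinom_pascal]
    push_cast
    ring_nf
  have hzero : (-1) ^ (m + 1 + 0) * qbinom (m + 1) 0 * y ^ (2 * ((0 : ℕ) : ℤ) - (m + 1 : ℕ)) =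
      -L 0 := by
    simp only [L, qbinom_zero_right, Nat.cast_zero, mul_zero, neg_zero, zpow_zero]
    push_cast
    ring_nf
  have hlast : L (m + 1) = 0 := by simp [L, qbinom_eq_zero_of_lt]
  have hexpand (k : ℕ) : (-1) ^ (m + k) * qbinom m k * (y * q⁻¹) ^ (2 * (k : ℤ) - m) *
      (y * q ^ (m : ℤ) - y⁻¹ * q ^ (-(m : ℤ))) = U k - L k := by
    simp only [U, L]
    rw [zpow_add_one₀ hy, zpow_sub_one₀ hy, show 2 * ((m : ℤ) - k) = -(2 * k - m) + m by ring,
      show -(2 * (k : ℤ)) = -(2 * k - m) + -m by ring, zpow_add₀ q_ne_zero,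
      zpow_add₀ q_ne_zero, mul_zpow, inv_zpow', zpow_neg q (2 * (k : ℤ) - m)]
    field_simp
  -- By Pascal's rule the left side is `∑ U k - ∑ L (k + 1) - L 0`;
  -- the `L`s re-sum to `∑ L k` because `L (m + 1) = 0`.
  have hL : ∑ k ∈ range (m + 1), L (k + 1) + L 0 = ∑ k ∈ range (m + 1), L k := by
    rw [← sum_range_succ', sum_range_succ, hlast, add_zero]
  rw [sum_range_succ', sum_congr rfl fun k _ => hsucc k, hzero, sum_mul,
    sum_congr rfl fun k _ => hexpand k, sum_sub_distrib, sum_sub_distrib, ← hL]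
  ring

theorem prod_eq_sum_qbinom (m : ℕ) {y : F} (hy : y ≠ 0) :
    ∏ l ∈ range m, (y * q ^ (2 * (l : ℤ) - m + 1) - y⁻¹ * q ^ (-(2 * (l : ℤ) - m + 1))) =
      ∑ k ∈ range (m + 1), (-1) ^ (m + k) * qbinom m k * y ^ (2 * (k : ℤ) - m) := by
  induction m generalizing y with
  | zero => simp [qbinom_zero_right]
  | succ m ih =>
    rw [qbinom_sum_succ m hy, ← ih (mul_ne_zero hy (inv_ne_zero q_ne_zero)), prod_range_succ]
    congr 1
    · refine prod_congr rfl fun l _ => ?_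
      rw [mul_inv, inv_inv, mul_assoc, mul_assoc, ← zpow_neg_one q, ← zpow_add₀ q_ne_zero,
        ← zpow_one_add₀ q_ne_zero]
      push_cast
      ring_nf
    · push_cast
      ring_nf

lemma sum_Icc_one_eq_sum_range {M : Type*} [AddCommMonoid M] (f : ℕ → M) (n : ℕ) :
    ∑ k ∈ Icc 1 n, f k = ∑ k ∈ range n, f (k + 1) := by
  rw [← Ico_add_one_right_eq_Icc, sum_Ico_eq_sum_range, Nat.add_sub_cancel]
  exact sum_congr rfl fun k _ => by rw [add_comm]

lemma qbinom_term_reflect_add (i j : ℕ) (hj : j < i) (y : F) :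
    (-1) ^ (2 * i - 1 + (i - 1 - j)) * qbinom (2 * i - 1) (i - 1 - j) *
        y ^ (2 * ((i - 1 - j : ℕ) : ℤ) - (2 * i - 1 : ℕ)) +
      (-1) ^ (2 * i - 1 + (i + j)) * qbinom (2 * i - 1) (i + j) *
        y ^ (2 * ((i + j : ℕ) : ℤ) - (2 * i - 1 : ℕ)) =
      alpha i (j + 1) *
        (y ^ (2 * ((j + 1 : ℕ) : ℤ) - 1) - y ^ (-(2 * ((j + 1 : ℕ) : ℤ) - 1))) := by
  obtain ⟨d, rfl⟩ : ∃ d, i = j + d + 1 := ⟨i - j - 1, by omega⟩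
  have hm : 2 * (j + d + 1) - 1 = 2 * j + 2 * d + 1 := by omega
  have hd : j + d + 1 - 1 - j = d := by omega
  have hd' : j + d + 1 - (j + 1) = d := by omega
  have hsymm : qbinom (2 * j + 2 * d + 1) (j + d + 1 + j) = qbinom (2 * j + 2 * d + 1) d := by
    rw [show j + d + 1 + j = 2 * j + 2 * d + 1 - d by omega, qbinom_symm (by omega)]
  have hsign₁ : (-1 : F) ^ (2 * j + 2 * d + 1 + (j + d + 1 + j)) = (-1) ^ d :=
    neg_one_pow_congr (by simp only [Nat.even_iff]; omega)
  have hsign₂ : (-1 : F) ^ (2 * j + 2 * d + 1 + d) = -(-1) ^ d := by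
    rw [show -(-1 : F) ^ d = (-1) ^ (d + 1) by ring]
    exact neg_one_pow_congr (by simp only [Nat.even_iff]; omega)
  rw [alpha, hm, hd, hd', hsymm, hsign₁, hsign₂]
  push_cast
  ring_nf

lemma sum_qbinom_odd (i : ℕ) (y : F) :
    ∑ k ∈ range (2 * i), (-1) ^ (2 * i - 1 + k) * qbinom (2 * i - 1) k *
        y ^ (2 * (k : ℤ) - (2 * i - 1 : ℕ)) =
      ∑ k ∈ Icc 1 i, alpha i k * (y ^ (2 * (k : ℤ) - 1) - y ^ (-(2 * (k : ℤ) - 1))) := by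
  rw [range_eq_Ico, ← sum_Ico_consecutive _ (Nat.zero_le i) (by omega), ← range_eq_Ico,
    sum_Ico_eq_sum_range, show 2 * i - i = i by omega, ← sum_range_reflect, ← sum_add_distrib,
    sum_Icc_one_eq_sum_range]
  exact sum_congr rfl fun j hj => qbinom_term_reflect_add i j (mem_range.mp hj) y

lemma prod_brace_Icc (p : ℤ) {i : ℕ} (hi : 1 ≤ i) :
    ∏ j ∈ Icc (p - i + 1) (p + i - 1), brace j =
      ∑ k ∈ Icc 1 i, alpha i k * brace ((2 * k - 1) * p) := by
  have hy : q ^ (2 * p) ≠ 0 := zpow_ne_zero _ q_ne_zero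
  have hm : ((2 * i - 1 : ℕ) : ℤ) = 2 * i - 1 := by omega
  calc ∏ j ∈ Icc (p - i + 1) (p + i - 1), brace j
      = ∏ l ∈ range (2 * i - 1), (q ^ (2 * p) * q ^ (2 * (l : ℤ) - (2 * i - 1 : ℕ) + 1) -
          (q ^ (2 * p))⁻¹ * q ^ (-(2 * (l : ℤ) - (2 * i - 1 : ℕ) + 1))) := by
        rw [Int.Icc_eq_finset_map, prod_map,
          show (p + i - 1 + 1 - (p - i + 1)).toNat = 2 * i - 1 by omega]
        refine prod_congr rfl fun l _ => ?_
        rw [brace, hm, ← zpow_neg, ← zpow_add₀ q_ne_zero, ← zpow_add₀ q_ne_zero]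
        simp only [Function.Embedding.trans_apply, Nat.castEmbedding_apply, addLeftEmbedding_apply]
        ring_nf
    _ = ∑ k ∈ range (2 * i), (-1) ^ (2 * i - 1 + k) * qbinom (2 * i - 1) k *
          (q ^ (2 * p)) ^ (2 * (k : ℤ) - (2 * i - 1 : ℕ)) := by
        rw [prod_eq_sum_qbinom _ hy, Nat.sub_add_cancel (by omega)]
    _ = ∑ k ∈ Icc 1 i, alpha i k * brace ((2 * k - 1) * p) := by
        rw [sum_qbinom_odd]
        refine sum_congr rfl fun k _ => ?_
        rw [brace, ← zpow_mul, ← zpow_mul]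
        ring_nf

lemma cyc_eq_prod_brace (p : ℕ) {i : ℕ} (hi : 1 ≤ i) :
    cyc p i = (q ^ (2 : ℤ) - q ^ (-2 : ℤ))⁻¹ *
      ∏ j ∈ Icc ((p : ℤ) - i + 1) ((p : ℤ) + i - 1), brace j := by
  by_cases hip : i ≤ p
  · rw [cyc, if_pos ⟨hi, hip⟩]
    rfl
  -- for `i > p` the product contains the factor `{0} = 0`
  · rw [cyc, if_neg (by omega), prod_eq_zero (i := 0) (by simp only [mem_Icc]; omega)
      (by simp [brace]), mul_zero]

lemma neg_zpow_sub_neg_zpow_neg (c : ℤ) (p : ℕ) :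
    (-(q ^ (2 * c))) ^ (p : ℤ) - (-(q ^ (2 * c))) ^ (-(p : ℤ)) = (-1) ^ p * brace (c * p) := by
  have hpow : (-(q ^ (2 * c))) ^ (p : ℤ) = (-1) ^ p * q ^ (2 * (c * p)) := by
    rw [zpow_natCast, neg_pow, ← zpow_natCast (q ^ _), ← zpow_mul, mul_assoc]
  rw [zpow_neg, hpow, brace, mul_inv, ← inv_pow, inv_neg, inv_one, ← zpow_neg]
  ring

lemma neg_one_pow_mul_cyc (p i : ℕ) :
    (-1) ^ p * cyc p i = (q ^ (2 : ℤ) - q ^ (-2 : ℤ))⁻¹ * ∑ k ∈ Icc 1 i, alpha i k *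
      ((-(q ^ (2 * (2 * (k : ℤ) - 1)))) ^ (p : ℤ) -
        (-(q ^ (2 * (2 * (k : ℤ) - 1)))) ^ (-(p : ℤ))) := by
  rcases Nat.eq_zero_or_pos i with rfl | hi
  · simp [cyc]
  rw [cyc_eq_prod_brace p hi, prod_brace_Icc _ hi, mul_left_comm, mul_sum]
  congr 1
  refine sum_congr rfl fun k _ => ?_
  rw [neg_zpow_sub_neg_zpow_neg]
  ring

lemma sum_Icc_natCast {M : Type*} [AddCommMonoid M] (f : ℤ → M) (a b : ℕ) :
    ∑ j ∈ Icc (a : ℤ) b, f j = ∑ j ∈ Icc a b, f j := by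
  rw [Int.Icc_eq_finset_map, Finset.sum_map, ← Ico_add_one_right_eq_Icc, sum_Ico_eq_sum_range,
    show ((b : ℤ) + 1 - a).toNat = b + 1 - a by omega]
  simp

lemma fev_eq_sum (n : ℕ) (c : F) :
    fev n c = ∑ p ∈ Icc 1 n, a n p * (c ^ (p : ℤ) - c ^ (-(p : ℤ))) := by
  have h := sum_Icc_natCast (fun p => a n p * (c ^ p - c ^ (-p))) 1 n
  rwa [Nat.cast_one] at h

theorem lemma32_coefficientwise_general (n i : ℕ) :
    ∑ p ∈ Finset.Icc 1 n, (-1 : F) ^ p * a n (p : ℤ) * cyc p i =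
      (q ^ (2 : ℤ) - q ^ (-2 : ℤ))⁻¹ *
        ∑ k ∈ Finset.Icc 1 i, alpha i k * fev n (-(q ^ (2 * (2 * (k : ℤ) - 1)))) := by
  calc ∑ p ∈ Icc 1 n, (-1 : F) ^ p * a n p * cyc p i
      = ∑ p ∈ Icc 1 n, a n p * ((-1) ^ p * cyc p i) := sum_congr rfl fun p _ => by ring
    _ = _ := by
      simp_rw [neg_one_pow_mul_cyc, fev_eq_sum, mul_sum]
      rw [sum_comm]
      exact sum_congr rfl fun k _ => sum_congr rfl fun p _ => by ring

theorem lemma32_coefficientwise (n i : ℕ) (hi : 1 ≤ i) :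
    ∑ p ∈ Finset.Icc 1 n, (-1 : F) ^ p * a n (p : ℤ) * cyc p i =
      (q ^ (2 : ℤ) - q ^ (-2 : ℤ))⁻¹ *
        ∑ k ∈ Finset.Icc 1 i, alpha i k * fev n (-(q ^ (2 * (2 * (k : ℤ) - 1)))) :=
  lemma32_coefficientwise_general n i

end
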